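/- arXiv:1809.06996 — 2 statements merged into one kernel-verified Lean document; each statement's English description precedes it below -/
import Mathlib

section
/- Tangent portfolio formula: the maximizer of the Sharpe ratio w ↦ (wᵀμ)/√(wᵀΣw) over w ∈ ℝ^L subject to wᵀ1 = 1, when Σ is positive definite and 1ᵀΣ⁻¹μ > 0, is w* = Σ⁻¹μ / (1ᵀΣ⁻¹μ). -/
/-!
Put `v = Σ⁻¹μ`. Then `wᵀμ = wᵀΣv` is the inner product of `w` and `v` induced by `Σ`, so by
Cauchy–Schwarz the Sharpe ratio of every `w` is at most `√(vᵀΣv) = √(μᵀΣ⁻¹μ)`, which is the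
Sharpe ratio of `v` itself. The ratio is invariant under positive scaling, and `1ᵀΣ⁻¹μ > 0`
makes `w* = v / (1ᵀv)` a positive multiple of `v` satisfying the budget constraint.
-/

open Matrix

namespace Matrix

variable {n : Type*} [Fintype n]

theorem mulVec_nonsing_inv_mulVec [DecidableEq n] {R : Type*} [CommRing R] {A : Matrix n n R}
    (h : IsUnit A.det) (v : n → R) : A *ᵥ (A⁻¹ *ᵥ v) = v := by
  rw [mulVec_mulVec, mul_nonsing_inv _ h, one_mulVec]

theorem PosSemidef.sq_dotProduct_mulVec_le {M : Matrix n n ℝ} (hM : M.PosSemidef) (x y : n → ℝ) :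
    (x ⬝ᵥ M *ᵥ y) ^ 2 ≤ (x ⬝ᵥ M *ᵥ x) * (y ⬝ᵥ M *ᵥ y) := by
  let _ := M.toSeminormedAddCommGroup hM
  let _ := M.toInnerProductSpace hM
  -- the inner product induced by `M` is `⟪x, y⟫ = (M *ᵥ y) ⬝ᵥ star x`
  have h : (M *ᵥ y ⬝ᵥ star x) * (M *ᵥ y ⬝ᵥ star x) ≤
      (M *ᵥ x ⬝ᵥ star x) * (M *ᵥ y ⬝ᵥ star y) :=
    real_inner_mul_inner_self_le x y
  simpa [sq, dotProduct_comm] using h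

end Matrix

noncomputable def sharpeRatio {n : Type*} [Fintype n] (S : Matrix n n ℝ) (μ w : n → ℝ) : ℝ :=
  (w ⬝ᵥ μ) / √(w ⬝ᵥ S *ᵥ w)

section SharpeRatio

variable {n : Type*} [Fintype n] {S : Matrix n n ℝ} {μ : n → ℝ}

theorem sharpeRatio_smul_of_pos (w : n → ℝ) {c : ℝ} (hc : 0 < c) :
    sharpeRatio S μ (c • w) = sharpeRatio S μ w := by
  have hsqrt : √((c • w) ⬝ᵥ S *ᵥ (c • w)) = c * √(w ⬝ᵥ S *ᵥ w) := by
    rw [mulVec_smul, smul_dotProduct, dotProduct_smul, smul_eq_mul, smul_eq_mul, ← mul_assoc,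
      Real.sqrt_mul (mul_self_nonneg c), Real.sqrt_mul_self hc.le]
  rw [sharpeRatio, sharpeRatio, hsqrt, smul_dotProduct, smul_eq_mul,
    mul_div_mul_left _ _ hc.ne']

theorem sharpeRatio_inv_mulVec [DecidableEq n] (hS : IsUnit S.det) :
    sharpeRatio S μ (S⁻¹ *ᵥ μ) = √(μ ⬝ᵥ S⁻¹ *ᵥ μ) := by
  rw [sharpeRatio, mulVec_nonsing_inv_mulVec hS, dotProduct_comm, Real.div_sqrt]

theorem sharpeRatio_le_sqrt [DecidableEq n] (hS : S.PosDef) (w : n → ℝ) :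
    sharpeRatio S μ w ≤ √(μ ⬝ᵥ S⁻¹ *ᵥ μ) := by
  set v := S⁻¹ *ᵥ μ
  have hSv : S *ᵥ v = μ := mulVec_nonsing_inv_mulVec (S.isUnit_iff_isUnit_det.mp hS.isUnit) μ
  have hcs : (w ⬝ᵥ μ) ^ 2 ≤ (w ⬝ᵥ S *ᵥ w) * (μ ⬝ᵥ v) := by
    simpa [hSv, dotProduct_comm v μ] using hS.posSemidef.sq_dotProduct_mulVec_le w v
  refine div_le_of_le_mul₀ (Real.sqrt_nonneg _) (Real.sqrt_nonneg _) ?_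
  calc w ⬝ᵥ μ ≤ |w ⬝ᵥ μ| := le_abs_self _
    _ ≤ √((w ⬝ᵥ S *ᵥ w) * (μ ⬝ᵥ v)) := Real.abs_le_sqrt hcs
    _ = √(μ ⬝ᵥ v) * √(w ⬝ᵥ S *ᵥ w) := by
        rw [Real.sqrt_mul (by simpa using hS.posSemidef.dotProduct_mulVec_nonneg w), mul_comm]

end SharpeRatio

theorem tangent_portfolio_general
    {L : ℕ} (μvec : Fin L → ℝ) (Sig : Matrix (Fin L) (Fin L) ℝ)
    (hSig : Sig.PosDef)
    (ones : Fin L → ℝ)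
    (hpos : 0 < ones ⬝ᵥ Sig⁻¹.mulVec μvec)
    (wstar : Fin L → ℝ)
    (hwstar : wstar = (ones ⬝ᵥ Sig⁻¹.mulVec μvec)⁻¹ • Sig⁻¹.mulVec μvec) :
    wstar ⬝ᵥ ones = 1 ∧
      ∀ w : Fin L → ℝ, w ⬝ᵥ ones = 1 →
        (w ⬝ᵥ μvec) / Real.sqrt (w ⬝ᵥ Sig.mulVec w)
          ≤ (wstar ⬝ᵥ μvec) / Real.sqrt (wstar ⬝ᵥ Sig.mulVec wstar) := by
  refine ⟨?_, fun w _ => ?_⟩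
  · rw [hwstar, smul_dotProduct, dotProduct_comm _ ones, smul_eq_mul, inv_mul_cancel₀ hpos.ne']
  · change sharpeRatio Sig μvec w ≤ sharpeRatio Sig μvec wstar
    rw [hwstar, sharpeRatio_smul_of_pos _ (inv_pos.mpr hpos),
      sharpeRatio_inv_mulVec (Sig.isUnit_iff_isUnit_det.mp hSig.isUnit)]
    exact sharpeRatio_le_sqrt hSig w

/-- The tangent portfolio `w* = Σ⁻¹μ / (1ᵀΣ⁻¹μ)` is feasible and maximizes the
Sharpe ratio `wᵀμ / √(wᵀΣw)` over the budget constraint `wᵀ1 = 1`, when `Σ` is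
positive definite and `1ᵀΣ⁻¹μ > 0`. -/
theorem tangent_portfolio
    {L : ℕ} (μvec : Fin L → ℝ) (Sig : Matrix (Fin L) (Fin L) ℝ)
    (hSig : Sig.PosDef)
    (ones : Fin L → ℝ) (hones : ones = fun _ => 1)
    (hpos : 0 < ones ⬝ᵥ Sig⁻¹.mulVec μvec)
    (wstar : Fin L → ℝ)
    (hwstar : wstar = (ones ⬝ᵥ Sig⁻¹.mulVec μvec)⁻¹ • Sig⁻¹.mulVec μvec) :
    wstar ⬝ᵥ ones = 1 ∧
      ∀ w : Fin L → ℝ, w ⬝ᵥ ones = 1 →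
        (w ⬝ᵥ μvec) / Real.sqrt (w ⬝ᵥ Sig.mulVec w)
          ≤ (wstar ⬝ᵥ μvec) / Real.sqrt (wstar ⬝ᵥ Sig.mulVec wstar) :=
  tangent_portfolio_general μvec Sig hSig ones hpos wstar hwstar
end

section
/- MELO estimate for the optimal-input problem: with ω = (w/p − β₁)/(2β₂) and weighting Q(β) = 4β₂², the minimizer over ω̂ of E[((w/p − β₁) − 2β₂ ω̂)²] is ω̂* = (c E[β₂] − E[β₁β₂]) / (2 E[β₂²]), where c = w/p, provided E[β₂²] > 0. -/
open MeasureTheory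

/-- MELO estimate for the optimal-input problem: the minimizer over `ω̂` of
`E[((w/p − β₁) − 2β₂ ω̂)²]` is `ω̂* = (c E[β₂] − E[β₁β₂]) / (2 E[β₂²])`
with `c = w/p`. -/
theorem melo_optimal_input
    (μ : Measure (ℝ × ℝ)) [IsProbabilityMeasure μ]
    (c : ℝ)
    (h1 : Integrable (fun b => b.1) μ)
    (h2 : Integrable (fun b => b.2) μ)
    (h11 : Integrable (fun b => b.1 ^ 2) μ)
    (h22 : Integrable (fun b => b.2 ^ 2) μ)
    (h12 : Integrable (fun b => b.1 * b.2) μ)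
    (hpos : 0 < ∫ b, b.2 ^ 2 ∂μ)
    (ωstar : ℝ)
    (hωstar : ωstar = (c * (∫ b, b.2 ∂μ) - ∫ b, b.1 * b.2 ∂μ) / (2 * ∫ b, b.2 ^ 2 ∂μ)) :
    ∀ ω : ℝ,
      (∫ b, ((c - b.1) - 2 * b.2 * ωstar) ^ 2 ∂μ)
        ≤ ∫ b, ((c - b.1) - 2 * b.2 * ω) ^ 2 ∂μ := by
  have hA : Integrable (fun b : ℝ × ℝ => (c - b.1) ^ 2) μ := by
    have h : (fun b : ℝ × ℝ => (c - b.1) ^ 2)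
        = fun b => c ^ 2 - 2 * c * b.1 + b.1 ^ 2 := by funext b; ring
    rw [h]
    exact ((integrable_const _).sub (h1.const_mul _)).add h11
  have hB : Integrable (fun b : ℝ × ℝ => c * b.2 - b.1 * b.2) μ :=
    (h2.const_mul c).sub h12
  have key : ∀ ω : ℝ,
      ∫ b, ((c - b.1) - 2 * b.2 * ω) ^ 2 ∂μ
        = (∫ b, (c - b.1) ^ 2 ∂μ)
          - 4 * ω * (c * (∫ b, b.2 ∂μ) - ∫ b, b.1 * b.2 ∂μ)
          + 4 * ω ^ 2 * (∫ b, b.2 ^ 2 ∂μ) := by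
    intro ω
    have h : (fun b : ℝ × ℝ => ((c - b.1) - 2 * b.2 * ω) ^ 2)
        = fun b => ((c - b.1) ^ 2 - (4 * ω) * (c * b.2 - b.1 * b.2))
            + (4 * ω ^ 2) * b.2 ^ 2 := by funext b; ring
    have hfg : Integrable
        (fun b : ℝ × ℝ => (c - b.1) ^ 2 - (4 * ω) * (c * b.2 - b.1 * b.2)) μ :=
      hA.sub (hB.const_mul _)
    have hg : Integrable (fun b : ℝ × ℝ => (4 * ω ^ 2) * b.2 ^ 2) μ :=
      h22.const_mul _
    have hh : Integrable (fun b : ℝ × ℝ => (4 * ω) * (c * b.2 - b.1 * b.2)) μ :=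
      hB.const_mul _
    rw [h, integral_add hfg hg, integral_sub hA hh, integral_const_mul,
      integral_const_mul, integral_sub (h2.const_mul c) h12, integral_const_mul]
  intro ω
  rw [key ω, key ωstar, hωstar]
  set A := ∫ b, (c - b.1) ^ 2 ∂μ
  set B := c * (∫ b, b.2 ∂μ) - ∫ b, b.1 * b.2 ∂μ with hBdef
  set S := ∫ b, b.2 ^ 2 ∂μ
  have hS : S ≠ 0 := ne_of_gt hpos
  set t := B / (2 * S) with ht
  have htB : B = 2 * S * t := by rw [ht]; field_simp
  rw [htB]
  nlinarith [sq_nonneg (ω - t), hpos]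
end
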